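/- (Dulac exit point asymptotics, outgoing coordinate.) Assume Δ > 0 and condition (condL), and fix ζ₀, η > 0. Define ω₀(η) := c₀^{−1/v} · ζ₀^{−b₀/a₀} · (∫₀^∞ M^{1/β₂ − 1}(c₀M² + c₁M + c₂)^{−(1/(2β₀)+1/(2β₂))} dM)^{β₀}. Then for every ε > 0 there exists T₀ > 0 such that whenever T ≥ T₀ and (ξ, ω) is admissible at time T, one has |ω · T^{β₀} − ω₀(η)| < ε. -/

import Mathlib

/-!
With `ρ = x / y` and `C(ρ) = c₀ρ² + c₁ρ + c₂` the field gives `ρ' = ρ y² C(ρ)`. For `q = b₂ / c₂`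
and `κ = Δ / (2 c₀ c₂)`, condition (condL) says exactly that `b₀ρ² + b₁ρ + b₂ = q C + κ ρ C'`,
which makes `Φ = y ρ^q C(ρ)^κ` a first integral. Along a solution `dt = g(ρ) dρ / Φ²`, where
`g(ρ) = ρ^(2q-1) C(ρ)^(2κ-1)` is the integrand of `ω₀`, so `T Φ² = ∫_{ξ/η}^{ζ₀/ω} g ≤ ∫₀^∞ g`.
Hence `Φ → 0` as `T → ∞`, which forces `ξ → 0` and `ω → 0`, so the integral tends to `∫₀^∞ g`.
Solving `T Φ(ζ₀, ω)² = ∫ g` for `ω T^β₀` expresses it as a function of `(ω, ∫ g)` that is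
continuous at `(0, ∫₀^∞ g)`, where its value is `ω₀`.
-/

open MeasureTheory

/-- `(ξ, ω)` is admissible at time `T` (for entry height `η` and exit abscissa `ζ₀`):
there is a positive solution of the cubic vector field on `[0,T]` from `(ξ,η)` to `(ζ₀,ω)`. -/
def DulacAdmissible (a₀ a₁ a₂ b₀ b₁ b₂ ζ₀ η T ξ ω : ℝ) : Prop :=
  0 < ξ ∧ 0 < ω ∧
  ∃ x y : ℝ → ℝ,
    (∀ t ∈ Set.Icc (0 : ℝ) T, 0 < x t ∧ 0 < y t) ∧
    (∀ t ∈ Set.Icc (0 : ℝ) T,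
      HasDerivAt x (x t * (a₀ * x t ^ 2 + a₁ * x t * y t + a₂ * y t ^ 2)) t ∧
      HasDerivAt y (-(y t * (b₀ * x t ^ 2 + b₁ * x t * y t + b₂ * y t ^ 2))) t) ∧
    x 0 = ξ ∧ y 0 = η ∧ x T = ζ₀ ∧ y T = ω

open Set Filter Topology

theorem intervalIntegral_le_setIntegral_Ioi {g : ℝ → ℝ} (hg : IntegrableOn g (Ioi 0))
    (hg₀ : ∀ m ∈ Ioi (0 : ℝ), 0 ≤ g m) {a b : ℝ} (ha : 0 ≤ a) (hb : 0 ≤ b) :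
    ∫ m in a..b, g m ≤ ∫ m in Ioi 0, g m := by
  have hI : 0 ≤ ∫ m in Ioi 0, g m := setIntegral_nonneg measurableSet_Ioi hg₀
  rcases le_total a b with hab | hba
  · rw [intervalIntegral.integral_of_le hab]
    exact setIntegral_mono_set hg ((ae_restrict_iff' measurableSet_Ioi).2 (ae_of_all _ hg₀))
      (Eventually.of_forall fun m hm => ha.trans_lt hm.1)
  · rw [intervalIntegral.integral_symm, intervalIntegral.integral_of_le hba]
    have : 0 ≤ ∫ m in Ioc b a, g m :=
      setIntegral_nonneg measurableSet_Ioc fun m hm => hg₀ m (hb.trans_lt hm.1)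
    linarith

theorem tendsto_intervalIntegral_nhdsGT_zero_atTop {g : ℝ → ℝ} (hg : IntegrableOn g (Ioi 0)) :
    Tendsto (fun p : ℝ × ℝ => ∫ m in p.1..p.2, g m) (𝓝[>] 0 ×ˢ atTop)
      (𝓝 (∫ m in Ioi 0, g m)) := by
  -- extended by zero, `g` is integrable on `ℝ`, so its primitive is continuous at `0`
  set G := (Ioi (0 : ℝ)).indicator g
  have hG : Integrable G := (integrable_indicator_iff measurableSet_Ioi).2 hg
  have hGI : ∫ m in Ioi 0, G m = ∫ m in Ioi 0, g m := by
    rw [setIntegral_indicator measurableSet_Ioi, inter_self]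
  have hlower : Tendsto (fun a => ∫ m in (0 : ℝ)..a, G m) (𝓝[>] 0) (𝓝 0) := by
    simpa using ((intervalIntegral.continuous_primitive
      (fun _ _ => hG.intervalIntegrable) 0).tendsto 0).mono_left nhdsWithin_le_nhds
  have hupper : Tendsto (fun b => ∫ m in (0 : ℝ)..b, G m) atTop (𝓝 (∫ m in Ioi 0, g m)) :=
    hGI ▸ intervalIntegral_tendsto_integral_Ioi 0 hG.integrableOn tendsto_id
  have hsub := (hupper.comp tendsto_snd).sub (hlower.comp tendsto_fst)
  rw [sub_zero] at hsub
  refine hsub.congr' ?_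
  filter_upwards [prod_mem_prod self_mem_nhdsWithin (Ioi_mem_atTop 0)] with p ⟨ha, hb⟩
  rw [Function.comp_apply, Function.comp_apply, intervalIntegral.integral_interval_sub_left
    hG.intervalIntegrable hG.intervalIntegrable]
  refine intervalIntegral.integral_congr fun m hm => indicator_of_mem ?_ g
  exact lt_of_lt_of_le (lt_min ha hb) hm.1

theorem tendsto_zero_of_rpow_le {α : Type*} {l : Filter α} {f φ : α → ℝ} {p : ℝ} (hp : 0 < p)
    (hφ : Tendsto φ l (𝓝 0)) (h : ∀ᶠ i in l, 0 ≤ f i ∧ f i ^ p ≤ φ i) :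
    Tendsto f l (𝓝 0) := by
  have hfp : Tendsto (fun i => f i ^ p) l (𝓝 0) :=
    squeeze_zero' (h.mono fun i hi => Real.rpow_nonneg hi.1 p) (h.mono fun i hi => hi.2) hφ
  have := ((Real.continuousAt_rpow_const 0 p⁻¹ (Or.inr (inv_pos.2 hp).le)).tendsto.comp hfp)
  rw [Real.zero_rpow (inv_pos.2 hp).ne'] at this
  exact this.congr' (h.mono fun i hi => Real.rpow_rpow_inv hi.1 hp.ne')

theorem exists_forall_ge_abs_sub_lt_of_tendsto {α β : Type*} {P : ℝ → α → β → Prop}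
    {f : ℝ → α → β → ℝ} {L : ℝ}
    (h : Tendsto (fun p : ℝ × α × β => f p.1 p.2.1 p.2.2)
      (comap Prod.fst atTop ⊓ 𝓟 {p | P p.1 p.2.1 p.2.2}) (𝓝 L)) :
    ∀ ε > 0, ∃ T₀ > 0, ∀ T ≥ T₀, ∀ a b, P T a b → |f T a b - L| < ε := by
  intro ε hε
  have hev := Metric.tendsto_nhds.1 h ε hε
  rw [eventually_inf_principal, eventually_comap, eventually_atTop] at hev
  obtain ⟨N, hN⟩ := hev
  refine ⟨max N 1, by positivity, fun T hT a b hP => ?_⟩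
  exact hN T (le_of_max_le_left hT) (T, a, b) rfl hP

theorem mul_rpow_eq_of_mul_sq_eq {T ω z B s a b p : ℝ} (hT : 0 < T) (hω : 0 < ω) (hz : 0 < z)
    (hB : 0 < B) (hp : p ≠ 0) (h : T * (z ^ a * ω ^ p * B ^ b) ^ 2 = s) :
    ω * T ^ (1 / (2 * p)) = z ^ (-(a / p)) * B ^ (-(b / p)) * s ^ (1 / (2 * p)) := by
  subst h
  refine Real.log_injOn_pos (mem_Ioi.2 (by positivity)) (mem_Ioi.2 (by positivity)) ?_
  rw [Real.log_mul (by positivity) (by positivity), Real.log_mul (by positivity) (by positivity),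
    Real.log_mul (by positivity) (by positivity), Real.log_rpow hT, Real.log_rpow hz,
    Real.log_rpow hB, Real.log_rpow (by positivity), Real.log_mul (by positivity) (by positivity),
    Real.log_pow, Real.log_mul (by positivity) (by positivity),
    Real.log_mul (by positivity) (by positivity), Real.log_rpow hz, Real.log_rpow hω,
    Real.log_rpow hB]
  field_simp
  ring

section Quadratic

variable {c₀ c₁ c₂ : ℝ}

theorem exists_pos_le_quadratic (hc₀ : 0 < c₀) (hdisc : c₁ ^ 2 < 4 * c₀ * c₂) :
    ∃ δ > 0, ∀ m, δ ≤ c₀ * m ^ 2 + c₁ * m + c₂ := by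
  refine ⟨(4 * c₀ * c₂ - c₁ ^ 2) / (4 * c₀), div_pos (by linarith) (by positivity), fun m => ?_⟩
  rw [div_le_iff₀ (by positivity)]
  nlinarith [sq_nonneg (2 * c₀ * m + c₁)]

theorem exists_pos_mul_sq_le_quadratic (hc₀ : 0 < c₀) (hdisc : c₁ ^ 2 < 4 * c₀ * c₂) :
    ∃ δ > 0, ∀ m, δ * m ^ 2 ≤ c₀ * m ^ 2 + c₁ * m + c₂ := by
  have hc₂ : 0 < c₂ := by nlinarith [sq_nonneg c₁]
  refine ⟨(4 * c₀ * c₂ - c₁ ^ 2) / (4 * c₂), div_pos (by linarith) (by positivity), fun m => ?_⟩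
  rw [div_mul_eq_mul_div, div_le_iff₀ (by positivity)]
  nlinarith [sq_nonneg (c₁ * m + 2 * c₂)]

theorem quadratic_pos (hc₀ : 0 < c₀) (hdisc : c₁ ^ 2 < 4 * c₀ * c₂) (m : ℝ) :
    0 < c₀ * m ^ 2 + c₁ * m + c₂ :=
  have ⟨_, hδ, hδQ⟩ := exists_pos_le_quadratic hc₀ hdisc
  hδ.trans_le (hδQ m)

theorem continuousOn_rpow_mul_quadratic_rpow (hQ : ∀ m, 0 < c₀ * m ^ 2 + c₁ * m + c₂)
    {e₁ e₂ : ℝ} : ContinuousOn (fun m => m ^ e₁ * (c₀ * m ^ 2 + c₁ * m + c₂) ^ e₂) (Ioi 0) :=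
  fun m hm => ((Real.continuousAt_rpow_const m e₁ (Or.inl (ne_of_gt hm))).mul
    ((by fun_prop : Continuous fun m : ℝ => c₀ * m ^ 2 + c₁ * m + c₂).continuousAt.rpow_const
      (Or.inl (hQ m).ne'))).continuousWithinAt

theorem integrableOn_rpow_mul_quadratic_rpow (hc₀ : 0 < c₀) (hdisc : c₁ ^ 2 < 4 * c₀ * c₂)
    {e₁ e₂ : ℝ} (he₁ : -1 < e₁) (he : e₁ + 2 * e₂ < -1) :
    IntegrableOn (fun m => m ^ e₁ * (c₀ * m ^ 2 + c₁ * m + c₂) ^ e₂) (Ioi 0) := by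
  have he₂ : e₂ ≤ 0 := by linarith
  obtain ⟨δ, hδ, hδQ⟩ := exists_pos_le_quadratic hc₀ hdisc
  obtain ⟨δ', hδ', hδ'Q⟩ := exists_pos_mul_sq_le_quadratic hc₀ hdisc
  have hcont := continuousOn_rpow_mul_quadratic_rpow (quadratic_pos hc₀ hdisc) (e₁ := e₁) (e₂ := e₂)
  have hnorm : ∀ m ∈ Ioi (0 : ℝ),
      ‖m ^ e₁ * (c₀ * m ^ 2 + c₁ * m + c₂) ^ e₂‖ = m ^ e₁ * (c₀ * m ^ 2 + c₁ * m + c₂) ^ e₂ :=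
    fun m (hm : 0 < m) => Real.norm_of_nonneg (by have := quadratic_pos hc₀ hdisc m; positivity)
  have near_zero : IntegrableOn (fun m => m ^ e₁ * (c₀ * m ^ 2 + c₁ * m + c₂) ^ e₂) (Ioc 0 1) := by
    refine Integrable.mono' (((intervalIntegrable_iff_integrableOn_Ioc_of_le zero_le_one).1
      (intervalIntegral.intervalIntegrable_rpow' he₁)).mul_const (δ ^ e₂))
      ((hcont.mono Ioc_subset_Ioi_self).aestronglyMeasurable measurableSet_Ioc) ?_
    refine (ae_restrict_iff' measurableSet_Ioc).2 (ae_of_all _ fun m hm => ?_)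
    rw [hnorm m hm.1]
    exact mul_le_mul_of_nonneg_left (Real.rpow_le_rpow_of_nonpos hδ (hδQ m) he₂)
      (Real.rpow_nonneg hm.1.le e₁)
  have near_top : IntegrableOn (fun m => m ^ e₁ * (c₀ * m ^ 2 + c₁ * m + c₂) ^ e₂) (Ioi 1) := by
    refine Integrable.mono' ((integrableOn_Ioi_rpow_of_lt he one_pos).const_mul (δ' ^ e₂))
      ((hcont.mono (Ioi_subset_Ioi zero_le_one)).aestronglyMeasurable measurableSet_Ioi) ?_
    refine (ae_restrict_iff' measurableSet_Ioi).2 (ae_of_all _ fun m (hm : 1 < m) => ?_)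
    have hm0 : 0 < m := one_pos.trans hm
    rw [hnorm m hm0]
    calc m ^ e₁ * (c₀ * m ^ 2 + c₁ * m + c₂) ^ e₂ ≤ m ^ e₁ * (δ' * m ^ 2) ^ e₂ :=
          mul_le_mul_of_nonneg_left (Real.rpow_le_rpow_of_nonpos (by positivity) (hδ'Q m) he₂)
            (Real.rpow_nonneg hm0.le e₁)
      _ = δ' ^ e₂ * m ^ (e₁ + 2 * e₂) := by
          rw [Real.mul_rpow hδ'.le (by positivity), ← Real.rpow_natCast, ← Real.rpow_mul hm0.le,
            Real.rpow_add hm0]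
          push_cast
          ring
  simpa only [Ioc_union_Ioi_eq_Ioi zero_le_one] using near_zero.union near_top

end Quadratic

noncomputable def firstIntegral (c₀ c₁ c₂ q κ x y : ℝ) : ℝ :=
  y * (x / y) ^ q * (c₀ * (x / y) ^ 2 + c₁ * (x / y) + c₂) ^ κ

section FirstIntegral

variable {c₀ c₁ c₂ q κ : ℝ}

theorem mul_rpow_le_firstIntegral {x y δ : ℝ} (hx : 0 ≤ x) (hy : 0 ≤ y) (hδ : 0 ≤ δ)
    (hδQ : δ ≤ c₀ * (x / y) ^ 2 + c₁ * (x / y) + c₂) (hκ : 0 ≤ κ) :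
    δ ^ κ * y * (x / y) ^ q ≤ firstIntegral c₀ c₁ c₂ q κ x y := by
  calc δ ^ κ * y * (x / y) ^ q = y * (x / y) ^ q * δ ^ κ := by ring
    _ ≤ firstIntegral c₀ c₁ c₂ q κ x y := by unfold firstIntegral; gcongr

theorem firstIntegral_eq_rpow {x y : ℝ} (hx : 0 < x) (hy : 0 < y)
    (hQ : 0 ≤ c₂ * (y / x) ^ 2 + c₁ * (y / x) + c₀) :
    firstIntegral c₀ c₁ c₂ q κ x y
      = x ^ (q + 2 * κ) * y ^ (1 - q - 2 * κ) * (c₂ * (y / x) ^ 2 + c₁ * (y / x) + c₀) ^ κ := by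
  have hswap : c₀ * (x / y) ^ 2 + c₁ * (x / y) + c₂
      = (x / y) ^ 2 * (c₂ * (y / x) ^ 2 + c₁ * (y / x) + c₀) := by
    field_simp
    ring
  rw [firstIntegral, hswap, Real.mul_rpow (by positivity) hQ, ← Real.rpow_natCast,
    ← Real.rpow_mul (by positivity), Nat.cast_ofNat, ← mul_assoc, mul_assoc y,
    ← Real.rpow_add (by positivity), Real.div_rpow hx.le hy.le,
    show 1 - q - 2 * κ = 1 - (q + 2 * κ) by ring, Real.rpow_sub hy, Real.rpow_one]
  field_simp

theorem sq_firstIntegral_eq {x y : ℝ} (hx : 0 < x) (hy : 0 < y)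
    (hQ : 0 < c₀ * (x / y) ^ 2 + c₁ * (x / y) + c₂) :
    (x / y) ^ (2 * q - 1) * (c₀ * (x / y) ^ 2 + c₁ * (x / y) + c₂) ^ (2 * κ - 1)
        * (x / y * y ^ 2 * (c₀ * (x / y) ^ 2 + c₁ * (x / y) + c₂))
      = firstIntegral c₀ c₁ c₂ q κ x y ^ 2 := by
  have hr : 0 < x / y := div_pos hx hy
  rw [firstIntegral, Real.rpow_sub_one hr.ne', Real.rpow_sub_one hQ.ne', two_mul, two_mul,
    Real.rpow_add hr, Real.rpow_add hQ]
  generalize c₀ * (x / y) ^ 2 + c₁ * (x / y) + c₂ = Q at hQ ⊢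
  field_simp

end FirstIntegral

section CubicSolution

variable {a₀ a₁ a₂ b₀ b₁ b₂ c₀ c₁ c₂ q κ T : ℝ} {x y : ℝ → ℝ}

theorem hasDerivAt_div_of_cubic (hc₀ : c₀ = a₀ + b₀) (hc₁ : c₁ = a₁ + b₁) (hc₂ : c₂ = a₂ + b₂)
    {t : ℝ} (hx : HasDerivAt x (x t * (a₀ * x t ^ 2 + a₁ * x t * y t + a₂ * y t ^ 2)) t)
    (hy : HasDerivAt y (-(y t * (b₀ * x t ^ 2 + b₁ * x t * y t + b₂ * y t ^ 2))) t)
    (hyt : y t ≠ 0) :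
    HasDerivAt (fun s => x s / y s)
      (x t / y t * y t ^ 2 * (c₀ * (x t / y t) ^ 2 + c₁ * (x t / y t) + c₂)) t := by
  refine (hx.div hy hyt).congr_deriv ?_
  rw [hc₀, hc₁, hc₂]
  field_simp
  ring

theorem hasDerivAt_firstIntegral_eq_zero (hc₀ : c₀ = a₀ + b₀) (hc₁ : c₁ = a₁ + b₁)
    (hc₂ : c₂ = a₂ + b₂) (hb₀ : b₀ = (q + 2 * κ) * c₀) (hb₁ : b₁ = (q + κ) * c₁)
    (hb₂ : b₂ = q * c₂) {t : ℝ}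
    (hx : HasDerivAt x (x t * (a₀ * x t ^ 2 + a₁ * x t * y t + a₂ * y t ^ 2)) t)
    (hy : HasDerivAt y (-(y t * (b₀ * x t ^ 2 + b₁ * x t * y t + b₂ * y t ^ 2))) t)
    (hxt : 0 < x t) (hyt : 0 < y t)
    (hQ : 0 < c₀ * (x t / y t) ^ 2 + c₁ * (x t / y t) + c₂) :
    HasDerivAt (fun s => firstIntegral c₀ c₁ c₂ q κ (x s) (y s)) 0 t := by
  have hρ := hasDerivAt_div_of_cubic hc₀ hc₁ hc₂ hx hy hyt.ne'
  have hr : 0 < x t / y t := div_pos hxt hyt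
  have hQρ : HasDerivAt (fun s => c₀ * (x s / y s) ^ 2 + c₁ * (x s / y s) + c₂)
      ((2 * c₀ * (x t / y t) + c₁) *
        (x t / y t * y t ^ 2 * (c₀ * (x t / y t) ^ 2 + c₁ * (x t / y t) + c₂))) t :=
    ((((hρ.pow 2).const_mul c₀).add (hρ.const_mul c₁)).add_const c₂).congr_deriv
      (by push_cast; ring)
  refine ((hy.mul (hρ.rpow_const (p := q) (Or.inl hr.ne'))).mul
    (hQρ.rpow_const (p := κ) (Or.inl hQ.ne'))).congr_deriv ?_
  have hx' : x t = x t / y t * y t := by field_simp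
  simp only [Pi.mul_apply]
  rw [Real.rpow_sub_one hr.ne', Real.rpow_sub_one hQ.ne']
  generalize x t / y t = r at hr hQ hx' ⊢
  generalize hQr : c₀ * r ^ 2 + c₁ * r + c₂ = Q at hQ ⊢
  rw [hx']
  field_simp
  -- up to a factor `y³ r^q Q^κ`, the derivative is `q Q + κ r (2c₀r + c₁) - (b₀r² + b₁r + b₂)`
  linear_combination (-(y t ^ 3 * r ^ q * Q ^ κ)) * (r ^ 2 * hb₀ + r * hb₁ + hb₂ + q * hQr)

theorem firstIntegral_eq_of_solution (hc₀ : c₀ = a₀ + b₀) (hc₁ : c₁ = a₁ + b₁)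
    (hc₂ : c₂ = a₂ + b₂) (hb₀ : b₀ = (q + 2 * κ) * c₀) (hb₁ : b₁ = (q + κ) * c₁)
    (hb₂ : b₂ = q * c₂) (hQ : ∀ m, 0 < c₀ * m ^ 2 + c₁ * m + c₂)
    (hpos : ∀ t ∈ Icc 0 T, 0 < x t ∧ 0 < y t)
    (hderiv : ∀ t ∈ Icc 0 T,
      HasDerivAt x (x t * (a₀ * x t ^ 2 + a₁ * x t * y t + a₂ * y t ^ 2)) t ∧
      HasDerivAt y (-(y t * (b₀ * x t ^ 2 + b₁ * x t * y t + b₂ * y t ^ 2))) t) :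
    ∀ t ∈ Icc 0 T,
      firstIntegral c₀ c₁ c₂ q κ (x t) (y t) = firstIntegral c₀ c₁ c₂ q κ (x 0) (y 0) := by
  have hd : ∀ t ∈ Icc 0 T, HasDerivAt (fun s => firstIntegral c₀ c₁ c₂ q κ (x s) (y s)) 0 t :=
    fun t ht => hasDerivAt_firstIntegral_eq_zero hc₀ hc₁ hc₂ hb₀ hb₁ hb₂ (hderiv t ht).1
      (hderiv t ht).2 (hpos t ht).1 (hpos t ht).2 (hQ _)
  exact constant_of_has_deriv_right_zero (fun t ht => (hd t ht).continuousAt.continuousWithinAt)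
    fun t ht => (hd t (Ico_subset_Icc_self ht)).hasDerivWithinAt

theorem mul_sq_firstIntegral_eq_intervalIntegral (hc₀ : c₀ = a₀ + b₀) (hc₁ : c₁ = a₁ + b₁)
    (hc₂ : c₂ = a₂ + b₂) (hb₀ : b₀ = (q + 2 * κ) * c₀) (hb₁ : b₁ = (q + κ) * c₁)
    (hb₂ : b₂ = q * c₂) (hQ : ∀ m, 0 < c₀ * m ^ 2 + c₁ * m + c₂) (hT : 0 ≤ T)
    (hpos : ∀ t ∈ Icc 0 T, 0 < x t ∧ 0 < y t)
    (hderiv : ∀ t ∈ Icc 0 T,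
      HasDerivAt x (x t * (a₀ * x t ^ 2 + a₁ * x t * y t + a₂ * y t ^ 2)) t ∧
      HasDerivAt y (-(y t * (b₀ * x t ^ 2 + b₁ * x t * y t + b₂ * y t ^ 2))) t) :
    T * firstIntegral c₀ c₁ c₂ q κ (x 0) (y 0) ^ 2
      = ∫ m in x 0 / y 0..x T / y T,
          m ^ (2 * q - 1) * (c₀ * m ^ 2 + c₁ * m + c₂) ^ (2 * κ - 1) := by
  have hIcc : uIcc 0 T = Icc 0 T := uIcc_of_le hT
  have hxc : ContinuousOn x (Icc 0 T) :=
    fun t ht => (hderiv t ht).1.continuousAt.continuousWithinAt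
  have hyc : ContinuousOn y (Icc 0 T) :=
    fun t ht => (hderiv t ht).2.continuousAt.continuousWithinAt
  have hρc : ContinuousOn (fun t => x t / y t) (Icc 0 T) :=
    hxc.div hyc fun t ht => (hpos t ht).2.ne'
  have hρd : ∀ t ∈ uIcc 0 T, HasDerivAt (fun s => x s / y s)
      (x t / y t * y t ^ 2 * (c₀ * (x t / y t) ^ 2 + c₁ * (x t / y t) + c₂)) t := by
    rw [hIcc]
    exact fun t ht => hasDerivAt_div_of_cubic hc₀ hc₁ hc₂ (hderiv t ht).1 (hderiv t ht).2
      (hpos t ht).2.ne'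
  have hρ'c : ContinuousOn (fun t => x t / y t * y t ^ 2 *
      (c₀ * (x t / y t) ^ 2 + c₁ * (x t / y t) + c₂)) (uIcc 0 T) := by
    rw [hIcc]
    exact (hρc.mul (hyc.pow 2)).mul (((continuousOn_const.mul (hρc.pow 2)).add
      (continuousOn_const.mul hρc)).add continuousOn_const)
  have hmaps : (fun t => x t / y t) '' uIcc 0 T ⊆ Ioi 0 := by
    rw [hIcc]
    rintro _ ⟨t, ht, rfl⟩
    exact div_pos (hpos t ht).1 (hpos t ht).2
  have hchange := intervalIntegral.integral_comp_mul_deriv' hρd hρ'c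
    ((continuousOn_rpow_mul_quadratic_rpow hQ (e₁ := 2 * q - 1) (e₂ := 2 * κ - 1)).mono hmaps)
  rw [← hchange, intervalIntegral.integral_congr
    (g := fun _ => firstIntegral c₀ c₁ c₂ q κ (x 0) (y 0) ^ 2), intervalIntegral.integral_const,
    smul_eq_mul, sub_zero]
  rw [hIcc]
  intro t ht
  simp only [Function.comp_apply]
  rw [sq_firstIntegral_eq (hpos t ht).1 (hpos t ht).2 (hQ _),
    firstIntegral_eq_of_solution hc₀ hc₁ hc₂ hb₀ hb₁ hb₂ hQ hpos hderiv t ht]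

end CubicSolution

theorem DulacAdmissible.firstIntegral_eq_and_mul_sq {a₀ a₁ a₂ b₀ b₁ b₂ c₀ c₁ c₂ q κ : ℝ}
    (hc₀ : c₀ = a₀ + b₀) (hc₁ : c₁ = a₁ + b₁) (hc₂ : c₂ = a₂ + b₂)
    (hb₀ : b₀ = (q + 2 * κ) * c₀) (hb₁ : b₁ = (q + κ) * c₁) (hb₂ : b₂ = q * c₂)
    (hQ : ∀ m, 0 < c₀ * m ^ 2 + c₁ * m + c₂) {ζ₀ η T ξ ω : ℝ}
    (h : DulacAdmissible a₀ a₁ a₂ b₀ b₁ b₂ ζ₀ η T ξ ω) (hT : 0 ≤ T) :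
    firstIntegral c₀ c₁ c₂ q κ ξ η = firstIntegral c₀ c₁ c₂ q κ ζ₀ ω ∧
      T * firstIntegral c₀ c₁ c₂ q κ ζ₀ ω ^ 2
        = ∫ m in ξ / η..ζ₀ / ω, m ^ (2 * q - 1) * (c₀ * m ^ 2 + c₁ * m + c₂) ^ (2 * κ - 1) := by
  obtain ⟨-, -, x, y, hpos, hderiv, rfl, rfl, rfl, rfl⟩ := h
  have hconst := firstIntegral_eq_of_solution hc₀ hc₁ hc₂ hb₀ hb₁ hb₂ hQ hpos hderiv T
    (right_mem_Icc.2 hT)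
  exact ⟨hconst.symm,
    hconst ▸ mul_sq_firstIntegral_eq_intervalIntegral hc₀ hc₁ hc₂ hb₀ hb₁ hb₂ hQ hT hpos hderiv⟩

theorem tendsto_nhdsGT_zero_of_mul_sq_firstIntegral_le {α : Type*} {l : Filter α}
    {T ξ ω : α → ℝ} {c₀ c₁ c₂ q κ p C ζ₀ η : ℝ} (hc₀ : 0 < c₀) (hdisc : c₁ ^ 2 < 4 * c₀ * c₂)
    (hq : 0 < q) (hκ : 0 ≤ κ) (hp : 0 < p) (hqκp : q + 2 * κ + p = 1) (hζ₀ : 0 < ζ₀)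
    (hη : 0 < η) (hT : Tendsto T l atTop)
    (h : ∀ᶠ i in l, 0 < ξ i ∧ 0 < ω i ∧
      firstIntegral c₀ c₁ c₂ q κ (ξ i) η = firstIntegral c₀ c₁ c₂ q κ ζ₀ (ω i) ∧
      T i * firstIntegral c₀ c₁ c₂ q κ ζ₀ (ω i) ^ 2 ≤ C) :
    Tendsto (fun i => ξ i / η) l (𝓝[>] 0) ∧ Tendsto ω l (𝓝[>] 0) := by
  obtain ⟨δ, hδ, hδQ⟩ := exists_pos_le_quadratic hc₀ hdisc
  have hc₂ : 0 < c₂ := by nlinarith [sq_nonneg c₁]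
  obtain ⟨δ', hδ', hδ'Q⟩ := exists_pos_le_quadratic (c₁ := c₁) (c₂ := c₀) hc₂ (by linarith)
  have hΦ : Tendsto (fun i => firstIntegral c₀ c₁ c₂ q κ ζ₀ (ω i)) l (𝓝 0) := by
    refine tendsto_zero_of_rpow_le two_pos (tendsto_const_nhds (x := C) |>.div_atTop hT) ?_
    filter_upwards [h, hT.eventually_gt_atTop 0] with i ⟨_, hω, _, hle⟩ hTi
    refine ⟨(by positivity : 0 ≤ δ ^ κ * ω i * (ζ₀ / ω i) ^ q).trans
      (mul_rpow_le_firstIntegral hζ₀.le hω.le hδ.le (hδQ _) hκ), ?_⟩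
    rw [Real.rpow_two, le_div_iff₀ hTi, mul_comm]
    exact hle
  refine ⟨tendsto_nhdsWithin_iff.2 ⟨tendsto_zero_of_rpow_le hq
      (by simpa using hΦ.div_const (δ ^ κ * η)) ?_, h.mono fun i hi => div_pos hi.1 hη⟩,
    tendsto_nhdsWithin_iff.2 ⟨tendsto_zero_of_rpow_le hp
      (by simpa using hΦ.div_const (ζ₀ ^ (q + 2 * κ) * δ' ^ κ)) ?_, h.mono fun i hi => hi.2.1⟩⟩
  · filter_upwards [h] with i ⟨hξ, _, heq, _⟩
    refine ⟨by positivity, ?_⟩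
    rw [le_div_iff₀ (by positivity), ← heq, mul_comm]
    exact mul_rpow_le_firstIntegral hξ.le hη.le hδ.le (hδQ _) hκ
  · filter_upwards [h] with i ⟨_, hω, _, _⟩
    refine ⟨hω.le, ?_⟩
    rw [le_div_iff₀ (by positivity), firstIntegral_eq_rpow hζ₀ hω (hδ'.le.trans (hδ'Q _)),
      show 1 - q - 2 * κ = p by linarith]
    calc ω i ^ p * (ζ₀ ^ (q + 2 * κ) * δ' ^ κ) = ζ₀ ^ (q + 2 * κ) * ω i ^ p * δ' ^ κ := by ring
      _ ≤ _ := by gcongr; exact hδ'Q _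

theorem tendsto_mul_rpow_of_dulacAdmissible {a₀ a₁ a₂ b₀ b₁ b₂ c₀ c₁ c₂ q κ p ζ₀ η : ℝ}
    (hc₀ : c₀ = a₀ + b₀) (hc₁ : c₁ = a₁ + b₁) (hc₂ : c₂ = a₂ + b₂)
    (hb₀ : b₀ = (q + 2 * κ) * c₀) (hb₁ : b₁ = (q + κ) * c₁) (hb₂ : b₂ = q * c₂)
    (hc₀pos : 0 < c₀) (hdisc : c₁ ^ 2 < 4 * c₀ * c₂)
    (hq : 0 < q) (hκ : 0 ≤ κ) (hp : 0 < p) (hqκp : q + 2 * κ + p = 1)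
    (hζ₀ : 0 < ζ₀) (hη : 0 < η) :
    Tendsto (fun P : ℝ × ℝ × ℝ => P.2.2 * P.1 ^ (1 / (2 * p)))
      (comap Prod.fst atTop ⊓ 𝓟 {P | DulacAdmissible a₀ a₁ a₂ b₀ b₁ b₂ ζ₀ η P.1 P.2.1 P.2.2})
      (𝓝 (c₀ ^ (-(κ / p)) * ζ₀ ^ (-((q + 2 * κ) / p)) *
        (∫ m in Ioi 0, m ^ (2 * q - 1) * (c₀ * m ^ 2 + c₁ * m + c₂) ^ (2 * κ - 1)) ^
          (1 / (2 * p)))) := by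
  set l := comap Prod.fst atTop ⊓
    𝓟 {P : ℝ × ℝ × ℝ | DulacAdmissible a₀ a₁ a₂ b₀ b₁ b₂ ζ₀ η P.1 P.2.1 P.2.2}
  set g := fun m : ℝ => m ^ (2 * q - 1) * (c₀ * m ^ 2 + c₁ * m + c₂) ^ (2 * κ - 1)
  set I := ∫ m in Ioi 0, g m
  have hc₂pos : 0 < c₂ := by nlinarith [sq_nonneg c₁]
  have hQ := quadratic_pos hc₀pos hdisc
  have hQ' := quadratic_pos (c₁ := c₁) (c₂ := c₀) hc₂pos (by linarith)
  have hg : IntegrableOn g (Ioi 0) :=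
    integrableOn_rpow_mul_quadratic_rpow hc₀pos hdisc (by linarith) (by linarith)
  have hg₀ : ∀ m ∈ Ioi (0 : ℝ), 0 ≤ g m := fun m (hm : 0 < m) => by have := hQ m; positivity
  have hT : Tendsto (fun P : ℝ × ℝ × ℝ => P.1) l atTop := tendsto_comap.mono_left inf_le_left
  have hadm : ∀ᶠ P in l, 0 < P.1 ∧ 0 < P.2.1 ∧ 0 < P.2.2 ∧
        firstIntegral c₀ c₁ c₂ q κ P.2.1 η = firstIntegral c₀ c₁ c₂ q κ ζ₀ P.2.2 ∧
        P.1 * firstIntegral c₀ c₁ c₂ q κ ζ₀ P.2.2 ^ 2 = ∫ m in P.2.1 / η..ζ₀ / P.2.2, g m := by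
    filter_upwards [hT.eventually_gt_atTop 0, inf_le_right (a := comap Prod.fst atTop)
      (mem_principal_self _)] with P hP hP'
    exact ⟨hP, hP'.1, hP'.2.1,
      hP'.firstIntegral_eq_and_mul_sq hc₀ hc₁ hc₂ hb₀ hb₁ hb₂ hQ hP.le⟩
  obtain ⟨hξ, hω⟩ := tendsto_nhdsGT_zero_of_mul_sq_firstIntegral_le (C := I) hc₀pos hdisc hq hκ
    hp hqκp hζ₀ hη hT <| hadm.mono fun P ⟨_, hξ, hω, heq, hmul⟩ =>
      ⟨hξ, hω, heq, hmul ▸ intervalIntegral_le_setIntegral_Ioi hg hg₀ (by positivity)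
        (by positivity)⟩
  have hexit : Tendsto (fun P : ℝ × ℝ × ℝ => ζ₀ / P.2.2) l atTop := by
    simpa only [div_eq_mul_inv, Function.comp_def] using
      (tendsto_inv_nhdsGT_zero.comp hω).const_mul_atTop hζ₀
  have hint := (tendsto_intervalIntegral_nhdsGT_zero_atTop hg).comp (hξ.prodMk hexit)
  have hH : ContinuousAt (fun w : ℝ × ℝ => ζ₀ ^ (-((q + 2 * κ) / p)) *
      (c₂ * (w.1 / ζ₀) ^ 2 + c₁ * (w.1 / ζ₀) + c₀) ^ (-(κ / p)) * w.2 ^ (1 / (2 * p))) (0, I) :=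
    (continuousAt_const.mul ((by fun_prop : Continuous fun w : ℝ × ℝ =>
      c₂ * (w.1 / ζ₀) ^ 2 + c₁ * (w.1 / ζ₀) + c₀).continuousAt.rpow_const
        (Or.inl (hQ' _).ne'))).mul (continuous_snd.continuousAt.rpow_const (Or.inr (by positivity)))
  have hlim := hH.tendsto.comp ((tendsto_nhdsWithin_iff.1 hω).1.prodMk_nhds hint)
  convert hlim.congr' ?_ using 2
  · rw [show c₂ * ((0 : ℝ) / ζ₀) ^ 2 + c₁ * (0 / ζ₀) + c₀ = c₀ by simp]
    ring
  · filter_upwards [hadm] with P ⟨hT, _, hω, _, hmul⟩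
    rw [firstIntegral_eq_rpow hζ₀ hω (hQ' _).le, show 1 - q - 2 * κ = p by linarith] at hmul
    simp only [Function.comp_apply]
    exact (mul_rpow_eq_of_mul_sq_eq hT hω hζ₀ (hQ' _) hp.ne' hmul).symm

theorem coefficients_eq_of_condL {a₀ a₁ a₂ b₀ b₁ b₂ c₀ c₁ c₂ Δ u v : ℝ}
    (hc₀ : c₀ = a₀ + b₀) (hc₁ : c₁ = a₁ + b₁) (hc₂ : c₂ = a₂ + b₂)
    (hΔdef : Δ = a₂ * b₀ - a₀ * b₂) (hΔ : Δ ≠ 0) (hc₀pos : c₀ ≠ 0) (hc₂pos : c₂ ≠ 0)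
    (hu : u = 2 * b₂ * c₀ / Δ) (hv : v = 2 * a₀ * c₂ / Δ)
    (hcondL : b₁ * (v + 1) = a₁ * (u + 1)) :
    b₀ = (b₂ / c₂ + 2 * (Δ / (2 * c₀ * c₂))) * c₀ ∧ b₁ = (b₂ / c₂ + Δ / (2 * c₀ * c₂)) * c₁ := by
  constructor
  · field_simp
    rw [hΔdef, hc₀, hc₂]
    ring
  · rw [hu, hv] at hcondL
    field_simp at hcondL ⊢
    subst hc₀ hc₁ hc₂ hΔdef
    linear_combination hcondL

/-- (Dulac exit point asymptotics, outgoing coordinate.)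
For `Δ > 0` with (condL): `ω · T^{β₀} → ω₀(η) = c₀^{−1/v} ζ₀^{−b₀/a₀} (∫₀^∞ …)^{β₀}`
as `T → ∞`, uniformly over admissible pairs. -/
theorem dulac_outgoing_asymptotics
    (a₀ a₁ a₂ b₀ b₁ b₂ : ℝ)
    (ha₀ : 0 < a₀) (ha₂ : 0 < a₂) (hb₀ : 0 < b₀) (hb₂ : 0 < b₂)
    (c₀ c₁ c₂ Δ u v β₀ β₂ : ℝ)
    (hc₀ : c₀ = a₀ + b₀) (hc₁ : c₁ = a₁ + b₁) (hc₂ : c₂ = a₂ + b₂)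
    (hΔdef : Δ = a₂ * b₀ - a₀ * b₂) (hΔ : 0 < Δ)
    (hdisc : c₁ ^ 2 < 4 * c₀ * c₂)
    (hu : u = 2 * b₂ * c₀ / Δ) (hv : v = 2 * a₀ * c₂ / Δ)
    (hβ₀ : β₀ = (a₀ + b₀) / (2 * a₀)) (hβ₂ : β₂ = (a₂ + b₂) / (2 * b₂))
    (hcondL : b₁ * (v + 1) = a₁ * (u + 1))
    (ζ₀ η : ℝ) (hζ₀ : 0 < ζ₀) (hη : 0 < η)
    (ω₀ : ℝ)
    (hω₀ : ω₀ = c₀ ^ (-(1 / v)) * ζ₀ ^ (-(b₀ / a₀)) *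
      (∫ M in Set.Ioi (0 : ℝ),
        M ^ (1 / β₂ - 1) *
          (c₀ * M ^ 2 + c₁ * M + c₂) ^ (-(1 / (2 * β₀) + 1 / (2 * β₂)))) ^ β₀) :
    ∀ ε > 0, ∃ T₀ > 0, ∀ T ≥ T₀, ∀ ξ ω : ℝ,
      DulacAdmissible a₀ a₁ a₂ b₀ b₁ b₂ ζ₀ η T ξ ω →
      |ω * T ^ β₀ - ω₀| < ε := by
  have hc₀pos : 0 < c₀ := by rw [hc₀]; positivity
  have hc₂pos : 0 < c₂ := by rw [hc₂]; positivity
  obtain ⟨hb₀', hb₁'⟩ := coefficients_eq_of_condL hc₀ hc₁ hc₂ hΔdef hΔ.ne' hc₀pos.ne'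
    hc₂pos.ne' hu hv hcondL
  set q := b₂ / c₂ with hq
  set κ := Δ / (2 * c₀ * c₂) with hκ
  set p := a₀ / c₀ with hp
  have hb₂' : b₂ = q * c₂ := (div_mul_cancel₀ b₂ hc₂pos.ne').symm
  have hqκp : q + 2 * κ + p = 1 := by
    rw [hq, hκ, hp, hΔdef, hc₀, hc₂]; field_simp; ring
  have key := tendsto_mul_rpow_of_dulacAdmissible hc₀ hc₁ hc₂ hb₀' hb₁' hb₂' hc₀pos hdisc
    (by positivity) (by positivity) (by positivity) hqκp hζ₀ hη
  have hβ₀' : β₀ = 1 / (2 * p) := by rw [hβ₀, hp, hc₀]; field_simp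
  have he₁ : 1 / β₂ - 1 = 2 * q - 1 := by rw [hβ₂, hq, hc₂]; field_simp
  have he₂ : -(1 / (2 * β₀) + 1 / (2 * β₂)) = 2 * κ - 1 := by
    rw [hβ₀, hβ₂, hκ, hΔdef, hc₀, hc₂]; field_simp; ring
  have hv' : -(1 / v) = -(κ / p) := by rw [hv, hκ, hp]; field_simp
  have hb₀a₀ : -(b₀ / a₀) = -((q + 2 * κ) / p) := by
    rw [show q + 2 * κ = 1 - p by linarith, hp, hc₀]; field_simp; ring
  rw [hω₀, he₁, he₂, hv', hb₀a₀, hβ₀']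
  exact exists_forall_ge_abs_sub_lt_of_tendsto (f := fun T _ ω => ω * T ^ (1 / (2 * p)))
    (P := DulacAdmissible a₀ a₁ a₂ b₀ b₁ b₂ ζ₀ η) key
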